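/- (Failure of uniform substitution for N) For an atom p, the formula p → ¬¬p is N-valid, but the formula (p ∧ p) → ¬¬(p ∧ p) is not N-valid; hence the set of N-valid formulas is not closed under uniform substitution. -/

import Mathlib

/- Formalization of Lorenzen dialogue games, following Felscher's presentation.

   Propositional formulas are built from atoms using ¬, ∧, ∨, →.  A dialogue
   for a formula φ is a sequence of moves beginning with Proponent (P)
   asserting φ at position 0, with O moving at odd positions and P at even
   positions.  Each later move attacks or defends an earlier move of the other
   player, according to the particle rules.  Structural rules (D10, D11, D12,
   D13, E, and the variants D10*, D10′) constrain dialogues further.  P wins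
   if P made the last move and no moves are available to O; φ is S-valid if P
   has an S-winning strategy for φ. -/

namespace LorenzenDialogues

/-- Propositional formulas: atoms, ¬, ∧, ∨, →. -/
inductive Formula : Type
  | atom : ℕ → Formula
  | neg  : Formula → Formula
  | and  : Formula → Formula → Formula
  | or   : Formula → Formula → Formula
  | imp  : Formula → Formula → Formula
deriving DecidableEq

/-- Statements: formulas together with the symbolic attacks `?`, `∧_L`, `∧_R`. -/
inductive Statement : Type
  | form  : Formula → Statement
  | qmark : Statement
  | andL  : Statement
  | andR  : Statement
deriving DecidableEq

/-- Particle rules, attack part: which statements attack which formulas. -/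
inductive Attacks : Statement → Formula → Prop
  | andL (a b : Formula) : Attacks .andL (.and a b)
  | andR (a b : Formula) : Attacks .andR (.and a b)
  | qmark (a b : Formula) : Attacks .qmark (.or a b)
  | imp (a b : Formula) : Attacks (.form a) (.imp a b)
  | neg (a : Formula) : Attacks (.form a) (.neg a)

/-- Particle rules, defense part: `Defends χ a s` means `s` is a permitted
    defense of the formula `χ` against the attack `a`.  (A negation admits
    no defense.) -/
inductive Defends : Formula → Statement → Statement → Prop
  | andL (a b : Formula) : Defends (.and a b) .andL (.form a)
  | andR (a b : Formula) : Defends (.and a b) .andR (.form b)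
  | orL (a b : Formula) : Defends (.or a b) .qmark (.form a)
  | orR (a b : Formula) : Defends (.or a b) .qmark (.form b)
  | imp (a b : Formula) : Defends (.imp a b) (.form a) (.form b)

/-- A move: a statement, a flag recording whether it is an attack (`true`)
    or a defense (`false`), and the position of the earlier move it attacks,
    resp. the earlier attack it defends against. -/
structure Move : Type where
  statement : Statement
  isAttack : Bool
  ref : ℕ
deriving DecidableEq

/-- A dialogue: the initial formula asserted by P at position 0, followed by
    the list of later moves (the move at list index `i` occupies position
    `i + 1`; O moves at odd positions, P at even positions). -/
structure Dialogue : Type where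
  initial : Formula
  moves : List Move

/-- The statement asserted at position `n` (if any). -/
def Dialogue.stmtAt (d : Dialogue) (n : ℕ) : Option Statement :=
  if n = 0 then some (.form d.initial) else (d.moves[n - 1]?).map Move.statement

/-- The move at position `n ≥ 1` (if any); position 0 is the initial assertion,
    not a move. -/
def Dialogue.moveAt (d : Dialogue) (n : ℕ) : Option Move :=
  if n = 0 then none else d.moves[n - 1]?

/-- The move `m`, played at position `n ≥ 1`, is permitted by the particle
    rules: it refers to an earlier position of the other player; if it is an
    attack, it attacks a formula asserted there, and if it is a defense, it
    responds to an attack played there, as the particle rules prescribe. -/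
def MoveOK (d : Dialogue) (n : ℕ) (m : Move) : Prop :=
  m.ref < n ∧ m.ref % 2 ≠ n % 2 ∧
    (m.isAttack = true →
      ∃ ψ, d.stmtAt m.ref = some (.form ψ) ∧ Attacks m.statement ψ) ∧
    (m.isAttack = false →
      ∃ a χ, d.moveAt m.ref = some a ∧ a.isAttack = true ∧
        d.stmtAt a.ref = some (.form χ) ∧ Defends χ a.statement m.statement)

/-- The dialogue adheres to the particle rules (every move is legal). -/
def ParticleOK (d : Dialogue) : Prop :=
  ∀ i m, d.moves[i]? = some m → MoveOK d (i + 1) m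

/-- Position `n` carries a defense of the attack made at position `r`. -/
def IsDefenseOf (d : Dialogue) (n r : ℕ) : Prop :=
  ∃ m, d.moveAt n = some m ∧ m.isAttack = false ∧ m.ref = r

/-- Position `n` carries an attack on the assertion made at position `r`. -/
def IsAttackOn (d : Dialogue) (n r : ℕ) : Prop :=
  ∃ m, d.moveAt n = some m ∧ m.isAttack = true ∧ m.ref = r

/-- Position `n` carries an attack. -/
def IsAttackPos (d : Dialogue) (n : ℕ) : Prop :=
  ∃ m, d.moveAt n = some m ∧ m.isAttack = true

/-- The attack at position `r` is still open (no defense against it has yet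
    been played) before position `k`. -/
def OpenAt (d : Dialogue) (r k : ℕ) : Prop :=
  IsAttackPos d r ∧ ¬ ∃ j, j < k ∧ IsDefenseOf d j r

/-- (D10) P may assert an atomic formula only after it has been asserted by O
    before. -/
def D10 (d : Dialogue) : Prop :=
  ∀ n p, n % 2 = 0 → d.stmtAt n = some (.form (.atom p)) →
    ∃ j, j < n ∧ j % 2 = 1 ∧ d.stmtAt j = some (.form (.atom p))

/-- (D10*) P may assert an atom `p` only if O has asserted `p` or `¬p`
    before. -/
def D10star (d : Dialogue) : Prop :=
  ∀ n p, n % 2 = 0 → d.stmtAt n = some (.form (.atom p)) →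
    ∃ j, j < n ∧ j % 2 = 1 ∧
      (d.stmtAt j = some (.form (.atom p)) ∨
        d.stmtAt j = some (.form (.neg (.atom p))))

/-- (D10′) P may assert an atom `p` only if O has asserted `p` or `¬¬p`
    before. -/
def D10prime (d : Dialogue) : Prop :=
  ∀ n p, n % 2 = 0 → d.stmtAt n = some (.form (.atom p)) →
    ∃ j, j < n ∧ j % 2 = 1 ∧
      (d.stmtAt j = some (.form (.atom p)) ∨
        d.stmtAt j = some (.form (.neg (.neg (.atom p)))))

/-- (D11) When defending, only the most recent open attack may be responded
    to: the attack defended against is open, and no strictly more recent open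
    attack (against the same player) exists. -/
def D11 (d : Dialogue) : Prop :=
  ∀ n r, IsDefenseOf d n r →
    OpenAt d r n ∧ ¬ ∃ r', r < r' ∧ r' < n ∧ r' % 2 = r % 2 ∧ OpenAt d r' n

/-- (D12) An attack may be answered at most once. -/
def D12 (d : Dialogue) : Prop :=
  ∀ n₁ n₂ r, IsDefenseOf d n₁ r → IsDefenseOf d n₂ r → n₁ = n₂

/-- (D13) A P-assertion (made at an even position) may be attacked at most
    once. -/
def D13 (d : Dialogue) : Prop :=
  ∀ n₁ n₂ r, r % 2 = 0 → IsAttackOn d n₁ r → IsAttackOn d n₂ r → n₁ = n₂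

/-- (E) O can react only upon the immediately preceding P-statement. -/
def ERule (d : Dialogue) : Prop :=
  ∀ n m, n % 2 = 1 → d.moveAt n = some m → m.ref = n - 1

/-- A ruleset is a set of structural rules, i.e. a predicate on dialogues. -/
def Ruleset := Dialogue → Prop

/-- Ruleset D = {D10, D11, D12, D13}. -/
def rulesetD : Ruleset := fun d => D10 d ∧ D11 d ∧ D12 d ∧ D13 d

/-- Ruleset E = D ∪ {E}. -/
def rulesetE : Ruleset := fun d => rulesetD d ∧ ERule d

/-- Ruleset CL = E − {D11, D12} = {D10, D13, E}. -/
def rulesetCL : Ruleset := fun d => D10 d ∧ D13 d ∧ ERule d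

/-- Ruleset N = D − {D11, D12} = {D10, D13}. -/
def rulesetN : Ruleset := fun d => D10 d ∧ D13 d

/-- Ruleset E* = {D10*, D11, D12, D13, E}. -/
def rulesetEstar : Ruleset :=
  fun d => D10star d ∧ D11 d ∧ D12 d ∧ D13 d ∧ ERule d

/-- Ruleset E′ = {D10′, D11, D12, D13, E}. -/
def rulesetEprime : Ruleset :=
  fun d => D10prime d ∧ D11 d ∧ D12 d ∧ D13 d ∧ ERule d

/-- An S-dialogue: a dialogue adhering to the particle rules and to the
    structural rules S. -/
def Legal (S : Ruleset) (d : Dialogue) : Prop := ParticleOK d ∧ S d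

/-- Extend a dialogue by one move. -/
def Dialogue.extend (d : Dialogue) (m : Move) : Dialogue :=
  ⟨d.initial, d.moves ++ [m]⟩

/-- The position about to be played. -/
def nextPos (d : Dialogue) : ℕ := d.moves.length + 1

/-- It is P's turn (the next position is even). -/
def PTurn (d : Dialogue) : Prop := nextPos d % 2 = 0

/-- The move `m` legally extends the S-dialogue `d`. -/
def LegalExt (S : Ruleset) (d : Dialogue) (m : Move) : Prop :=
  Legal S (d.extend m)

/-- `PWinningC S C d` holds when P, moving under the additional constraint
    `C` on P's own choices, has a winning strategy in the S-dialogue game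
    continuing the dialogue `d`: at P's turn, P has a legal move (satisfying
    `C`) after which P is still winning; at O's turn, every legal O-move
    leads to a position where P is winning (in particular, if no O-move is
    available, P has won: P made the last move and O cannot move). -/
inductive PWinningC (S : Ruleset) (C : Dialogue → Move → Prop) : Dialogue → Prop
  | pMove (d : Dialogue) (m : Move) (hturn : PTurn d)
      (hm : LegalExt S d m) (hC : C d m)
      (h : PWinningC S C (d.extend m)) : PWinningC S C d
  | oMoves (d : Dialogue) (hturn : ¬ PTurn d)
      (h : ∀ m, LegalExt S d m → PWinningC S C (d.extend m)) :
      PWinningC S C d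

/-- P has a winning strategy continuing the S-dialogue `d`. -/
def PWinning (S : Ruleset) (d : Dialogue) : Prop :=
  PWinningC S (fun _ _ => True) d

/-- `valid S φ` (written `⊨_S φ`): the opening assertion of φ is itself a
    legal S-dialogue and P has an S-winning strategy for φ. -/
def valid (S : Ruleset) (φ : Formula) : Prop :=
  Legal S ⟨φ, []⟩ ∧ PWinning S ⟨φ, []⟩

/-- Derivability in intuitionistic propositional logic (a Hilbert-style
    axiomatization with modus ponens). -/
inductive IProv : Formula → Prop
  | k (a b : Formula) : IProv (.imp a (.imp b a))
  | s (a b c : Formula) :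
      IProv (.imp (.imp a (.imp b c)) (.imp (.imp a b) (.imp a c)))
  | andE1 (a b : Formula) : IProv (.imp (.and a b) a)
  | andE2 (a b : Formula) : IProv (.imp (.and a b) b)
  | andI (a b : Formula) : IProv (.imp a (.imp b (.and a b)))
  | orI1 (a b : Formula) : IProv (.imp a (.or a b))
  | orI2 (a b : Formula) : IProv (.imp b (.or a b))
  | orE (a b c : Formula) :
      IProv (.imp (.imp a c) (.imp (.imp b c) (.imp (.or a b) c)))
  | negI (a b : Formula) :
      IProv (.imp (.imp a b) (.imp (.imp a (.neg b)) (.neg a)))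
  | negE (a b : Formula) : IProv (.imp (.neg a) (.imp a b))
  | mp (a b : Formula) : IProv (.imp a b) → IProv a → IProv b

/-- The stability principle ¬¬p → p for the atom `p`. -/
def stab (p : ℕ) : Formula := .imp (.neg (.neg (.atom p))) (.atom p)

/-- Stable logic: intuitionistic propositional logic plus all instances of
    the stability scheme ¬¬p → p for atoms p, closed under modus ponens. -/
inductive StableProv : Formula → Prop
  | intuit (a : Formula) : IProv a → StableProv a
  | stab (p : ℕ) : StableProv (stab p)
  | mp (a b : Formula) : StableProv (.imp a b) → StableProv a → StableProv b

/-- Boolean evaluation of a formula under a valuation of its atoms. -/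
def Formula.eval (v : ℕ → Bool) : Formula → Bool
  | .atom p => v p
  | .neg a => !(a.eval v)
  | .and a b => a.eval v && b.eval v
  | .or a b => a.eval v || b.eval v
  | .imp a b => !(a.eval v) || b.eval v

/-- A classical tautology: true under every Boolean valuation. -/
def Tautology (φ : Formula) : Prop := ∀ v, φ.eval v = true

/-- Uniform substitution of formulas for atoms, applied homomorphically. -/
def Formula.subst (σ : ℕ → Formula) : Formula → Formula
  | .atom p => σ p
  | .neg a => .neg (a.subst σ)
  | .and a b => .and (a.subst σ) (b.subst σ)
  | .or a b => .or (a.subst σ) (b.subst σ)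
  | .imp a b => .imp (a.subst σ) (b.subst σ)

/-- The atoms occurring in a formula. -/
def Formula.atoms : Formula → List ℕ
  | .atom p => [p]
  | .neg a => a.atoms
  | .and a b => a.atoms ++ b.atoms
  | .or a b => a.atoms ++ b.atoms
  | .imp a b => a.atoms ++ b.atoms

/-- Conjunction of a nonempty list of formulas. -/
def conjList (f : Formula) : List Formula → Formula
  | [] => f
  | g :: gs => .and f (conjList g gs)

/-- The conjunction (¬¬p → p) ∧ … of stability instances for the atoms
    `p :: ps`. -/
def stabConj (p : ℕ) (ps : List ℕ) : Formula :=
  conjList (stab p) (ps.map stab)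


/-! The formula `p → ¬¬p` is won by P along a forced play: O attacks with `p`, P defends with
`¬¬p`, O attacks with `¬p`, and P attacks `¬p` with the atom `p` that O has conceded. O is then
stuck: D13 forbids attacking `p → ¬¬p` or `¬¬p` a second time, an atom cannot be attacked, and an
attack on a negation cannot be answered.

For `(p ∧ p) → ¬¬(p ∧ p)`, and for every formula none of whose subformulas can be attacked by
asserting an atom, O can keep the dialogue going forever, so P has no winning strategy. O keeps the
invariant that it asserts an atom only after P has made an attack that admits a defense. If such
an attack exists, O defends against it once more, which N permits as it lacks D12. Otherwise, by
D10 and the invariant, P's last move asserted a compound formula (a symbolic attack `∧_L`, `∧_R`,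
`?` would itself admit a defense), and O attacks it; by the hypothesis on subformulas this attack
is not an atom. -/

def Formula.subformulas : Formula → List Formula
  | .atom p => [.atom p]
  | .neg a => .neg a :: a.subformulas
  | .and a b => .and a b :: (a.subformulas ++ b.subformulas)
  | .or a b => .or a b :: (a.subformulas ++ b.subformulas)
  | .imp a b => .imp a b :: (a.subformulas ++ b.subformulas)

namespace Formula

theorem mem_subformulas_self (φ : Formula) : φ ∈ φ.subformulas := by
  cases φ <;> simp [subformulas]

theorem mem_subformulas_trans {φ ψ χ : Formula} (hψ : ψ ∈ φ.subformulas)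
    (hχ : χ ∈ ψ.subformulas) : χ ∈ φ.subformulas := by
  induction φ with
  | atom p => simp_all [subformulas]
  | neg a ih =>
    simp only [subformulas, List.mem_cons] at hψ ⊢
    rcases hψ with rfl | hψ
    · simpa [subformulas] using hχ
    · exact .inr (ih hψ)
  | and a b iha ihb | or a b iha ihb | imp a b iha ihb =>
    simp only [subformulas, List.mem_cons, List.mem_append] at hψ ⊢
    rcases hψ with rfl | hψ | hψ
    · simpa [subformulas] using hχ
    · exact .inr (.inl (iha hψ))
    · exact .inr (.inr (ihb hψ))

theorem exists_attacks {χ : Formula} (h : ∀ q, χ ≠ .atom q) : ∃ s, Attacks s χ := by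
  cases χ with
  | atom q => exact absurd rfl (h q)
  | neg a => exact ⟨_, .neg a⟩
  | and a b => exact ⟨_, .andL a b⟩
  | or a b => exact ⟨_, .qmark a b⟩
  | imp a b => exact ⟨_, .imp a b⟩

end Formula

theorem Attacks.mem_subformulas {χ ψ : Formula} (h : Attacks (.form χ) ψ) :
    χ ∈ ψ.subformulas := by
  cases h <;> simp [Formula.subformulas, Formula.mem_subformulas_self]

theorem Attacks.exists_defends {s : Statement} {ψ : Formula} (h : Attacks s ψ)
    (hs : ∀ φ, s ≠ .form φ) : ∃ t, Defends ψ s t := by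
  cases h with
  | andL a b => exact ⟨_, .andL a b⟩
  | andR a b => exact ⟨_, .andR a b⟩
  | qmark a b => exact ⟨_, .orL a b⟩
  | imp a b => exact absurd rfl (hs a)
  | neg a => exact absurd rfl (hs a)

theorem Defends.mem_subformulas {χ ψ : Formula} {s : Statement} (h : Defends ψ s (.form χ)) :
    χ ∈ ψ.subformulas := by
  cases h <;> simp [Formula.subformulas, Formula.mem_subformulas_self]

theorem Defends.exists_eq_form {ψ : Formula} {s t : Statement} (h : Defends ψ s t) :
    ∃ φ, t = .form φ := by
  cases h <;> exact ⟨_, rfl⟩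

namespace Dialogue

variable (d : Dialogue) (m : Move)

theorem stmtAt_succ (n : ℕ) : d.stmtAt (n + 1) = (d.moveAt (n + 1)).map Move.statement := by
  simp [stmtAt, moveAt]

theorem moveAt_extend (k : ℕ) :
    (d.extend m).moveAt k = if k = d.moves.length + 1 then some m else d.moveAt k := by
  unfold moveAt extend
  split_ifs <;> grind

theorem stmtAt_extend (k : ℕ) :
    (d.extend m).stmtAt k = if k = d.moves.length + 1 then some m.statement else d.stmtAt k := by
  rcases k with _ | k
  · simp [stmtAt, extend]
  · rw [stmtAt_succ, stmtAt_succ, moveAt_extend]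
    split_ifs <;> rfl

theorem exists_stmtAt_length : ∃ s, d.stmtAt d.moves.length = some s := by
  rcases h : d.moves.length with _ | n
  · exact ⟨_, rfl⟩
  · simp [stmtAt_succ, moveAt, List.getElem?_eq_getElem (show n < d.moves.length by omega)]

variable {d}

theorem pos_le_length_of_moveAt_eq_some {k : ℕ} {a : Move} (h : d.moveAt k = some a) :
    0 < k ∧ k ≤ d.moves.length := by
  rcases k with _ | k
  · simp [moveAt] at h
  · simp only [moveAt, Nat.add_one_ne_zero, if_false, Nat.add_sub_cancel] at h
    exact ⟨k.succ_pos, (List.getElem?_eq_some_iff.mp h).1⟩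

theorem le_length_of_stmtAt_eq_some {k : ℕ} {s : Statement} (h : d.stmtAt k = some s) :
    k ≤ d.moves.length := by
  rcases k with _ | k
  · exact Nat.zero_le _
  · rw [stmtAt_succ, Option.map_eq_some_iff] at h
    obtain ⟨a, ha, -⟩ := h
    exact (pos_le_length_of_moveAt_eq_some ha).2

theorem moveAt_extend_of_eq_some {k : ℕ} {a : Move} (h : d.moveAt k = some a) :
    (d.extend m).moveAt k = some a := by
  have := (pos_le_length_of_moveAt_eq_some h).2
  rw [moveAt_extend, if_neg (by omega), h]

theorem stmtAt_extend_of_eq_some {k : ℕ} {s : Statement} (h : d.stmtAt k = some s) :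
    (d.extend m).stmtAt k = some s := by
  have := le_length_of_stmtAt_eq_some h
  rw [stmtAt_extend, if_neg (by omega), h]

end Dialogue

open Dialogue

section Legality

variable {S : Ruleset} {d : Dialogue} {m : Move}

theorem ParticleOK.moveOK (hd : ParticleOK d) {n : ℕ} {a : Move} (h : d.moveAt n = some a) :
    MoveOK d n a := by
  obtain ⟨hn, -⟩ := pos_le_length_of_moveAt_eq_some h
  obtain ⟨k, rfl⟩ : ∃ k, n = k + 1 := ⟨n - 1, by omega⟩
  exact hd k a (by simpa [moveAt] using h)

theorem ParticleOK.mem_subformulas (hd : ParticleOK d) {n : ℕ} {χ : Formula}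
    (h : d.stmtAt n = some (.form χ)) : χ ∈ d.initial.subformulas := by
  induction n using Nat.strong_induction_on generalizing χ with
  | _ n ih =>
  rcases n with _ | n
  · cases h
    exact Formula.mem_subformulas_self _
  rw [stmtAt_succ, Option.map_eq_some_iff] at h
  obtain ⟨a, ha, hχ⟩ := h
  obtain ⟨hlt, -, hatt, hdef⟩ := hd.moveOK ha
  cases hb : a.isAttack
  · obtain ⟨b, ψ, hb, -, hψ, hdef⟩ := hdef hb
    have := (hd.moveOK hb).1
    rw [hχ] at hdef
    exact Formula.mem_subformulas_trans (ih _ (by omega) hψ) hdef.mem_subformulas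
  · obtain ⟨ψ, hψ, hatt⟩ := hatt hb
    rw [hχ] at hatt
    exact Formula.mem_subformulas_trans (ih _ hlt hψ) hatt.mem_subformulas

theorem MoveOK.extend {n : ℕ} {a : Move} (h : MoveOK d n a) : MoveOK (d.extend m) n a := by
  obtain ⟨hlt, hpar, hatt, hdef⟩ := h
  refine ⟨hlt, hpar, fun hb => ?_, fun hb => ?_⟩
  · obtain ⟨ψ, hψ, hψa⟩ := hatt hb
    exact ⟨ψ, stmtAt_extend_of_eq_some m hψ, hψa⟩
  · obtain ⟨b, χ, hb, hba, hχ, hχd⟩ := hdef hb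
    exact ⟨b, χ, moveAt_extend_of_eq_some m hb, hba, stmtAt_extend_of_eq_some m hχ, hχd⟩

theorem ParticleOK.extend (hd : ParticleOK d) (hm : MoveOK d (nextPos d) m) :
    ParticleOK (d.extend m) := by
  intro i a h
  have h' : (d.extend m).moveAt (i + 1) = some a := by simpa [moveAt] using h
  rw [moveAt_extend] at h'
  split_ifs at h' with hi
  · cases h'
    exact hi ▸ hm.extend
  · exact (hd.moveOK h').extend

theorem LegalExt.moveOK (h : LegalExt S d m) : MoveOK (d.extend m) (nextPos d) m :=
  h.1 d.moves.length m (by simp [Dialogue.extend])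

theorem isAttackOn_extend_iff {n r : ℕ} :
    IsAttackOn (d.extend m) n r ↔
      IsAttackOn d n r ∨ (n = nextPos d ∧ m.isAttack = true ∧ m.ref = r) := by
  simp only [IsAttackOn, moveAt_extend, nextPos]
  split_ifs with h
  · have : d.moveAt n = none := by
      rcases hn : d.moveAt n with _ | a
      · rfl
      · have := (pos_le_length_of_moveAt_eq_some hn).2; omega
    simp [← h, this]
  · simp [h]

theorem D13_extend_iff :
    D13 (d.extend m) ↔
      D13 d ∧ (m.isAttack = true → m.ref % 2 = 0 → ∀ n, ¬ IsAttackOn d n m.ref) := by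
  have old_ne_new {n r : ℕ} (h : IsAttackOn d n r) : n ≠ nextPos d := by
    obtain ⟨a, ha, -⟩ := h
    have := (pos_le_length_of_moveAt_eq_some ha).2
    simp only [nextPos]; omega
  constructor
  · intro h
    refine ⟨fun n₁ n₂ r hr h₁ h₂ => h n₁ n₂ r hr (isAttackOn_extend_iff.2 (.inl h₁))
      (isAttackOn_extend_iff.2 (.inl h₂)), fun hm hr n hn => old_ne_new hn ?_⟩
    exact h n _ _ hr (isAttackOn_extend_iff.2 (.inl hn))
      (isAttackOn_extend_iff.2 (.inr ⟨rfl, hm, rfl⟩))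
  · rintro ⟨h, hfresh⟩ n₁ n₂ r hr h₁ h₂
    rcases isAttackOn_extend_iff.1 h₁ with h₁ | ⟨rfl, hm, rfl⟩ <;>
      rcases isAttackOn_extend_iff.1 h₂ with h₂ | ⟨rfl, hm₂, hr₂⟩
    · exact h n₁ n₂ r hr h₁ h₂
    · subst hr₂; exact absurd h₁ (hfresh hm₂ hr n₁)
    · exact absurd h₂ (hfresh hm hr n₂)
    · rfl

theorem D10.extend (h : D10 d)
    (hm : nextPos d % 2 = 0 → ∀ q, m.statement = .form (.atom q) →
      ∃ j < nextPos d, j % 2 = 1 ∧ d.stmtAt j = some (.form (.atom q))) :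
    D10 (d.extend m) := by
  intro n q hn hq
  rw [stmtAt_extend] at hq
  split_ifs at hq with hn'
  · subst hn'
    obtain ⟨j, hj, hjo, hjq⟩ := hm hn q (Option.some_inj.1 hq)
    exact ⟨j, hj, hjo, stmtAt_extend_of_eq_some m hjq⟩
  · obtain ⟨j, hj, hjo, hjq⟩ := h n q hn hq
    exact ⟨j, hj, hjo, stmtAt_extend_of_eq_some m hjq⟩

theorem legal_rulesetN_nil {φ : Formula} (hφ : ∀ q, φ ≠ .atom q) : Legal rulesetN ⟨φ, []⟩ := by
  refine ⟨fun i a h => by simp at h, fun n q _ hq => ?_, fun n₁ _ _ _ ⟨a, ha, _⟩ => ?_⟩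
  · have := le_length_of_stmtAt_eq_some hq
    simp only [List.length_nil, Nat.le_zero] at this
    subst this
    exact absurd (Statement.form.inj (Option.some_inj.1 hq)) (hφ q)
  · have := pos_le_length_of_moveAt_eq_some ha
    simp only [List.length_nil] at this
    omega

theorem legalExt_rulesetN_of_pTurn (hd : Legal rulesetN d) (hturn : PTurn d)
    (hm : MoveOK d (nextPos d) m)
    (hatom : ∀ q, m.statement = .form (.atom q) →
      ∃ j < nextPos d, j % 2 = 1 ∧ d.stmtAt j = some (.form (.atom q))) :
    LegalExt rulesetN d m := by
  refine ⟨hd.1.extend hm, hd.2.1.extend fun _ => hatom, D13_extend_iff.2 ⟨hd.2.2, ?_⟩⟩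
  have := hm.2.1
  simp only [PTurn] at hturn
  omega

theorem legalExt_rulesetN_of_oTurn (hd : Legal rulesetN d) (hturn : ¬ PTurn d)
    (hm : MoveOK d (nextPos d) m)
    (hfresh : m.isAttack = true → ∀ n, ¬ IsAttackOn d n m.ref) :
    LegalExt rulesetN d m :=
  ⟨hd.1.extend hm, hd.2.1.extend fun h => absurd h hturn,
    D13_extend_iff.2 ⟨hd.2.2, fun h _ => hfresh h⟩⟩

theorem legalExt_rulesetN_attack_last (hd : Legal rulesetN d) (hturn : ¬ PTurn d)
    {χ : Formula} (hχ : d.stmtAt d.moves.length = some (.form χ)) {s : Statement}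
    (hs : Attacks s χ) : LegalExt rulesetN d ⟨s, true, d.moves.length⟩ := by
  refine legalExt_rulesetN_of_oTurn hd hturn
    ⟨by simp [nextPos], by simp only [nextPos]; omega, fun _ => ⟨χ, hχ, hs⟩, by simp⟩ ?_
  rintro - n ⟨a, ha, -, href⟩
  have := (hd.1.moveOK ha).1
  have := (pos_le_length_of_moveAt_eq_some ha).2
  simp only at href
  omega

end Legality

theorem not_pWinningC_of_invariant {S : Ruleset} {C : Dialogue → Move → Prop}
    (I : Dialogue → Prop)
    (hP : ∀ d m, I d → PTurn d → LegalExt S d m → I (d.extend m))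
    (hO : ∀ d, I d → ¬ PTurn d → ∃ m, LegalExt S d m ∧ I (d.extend m))
    {d : Dialogue} (hd : I d) : ¬ PWinningC S C d := by
  intro hw
  induction hw with
  | pMove d m hturn hm _ _ ih => exact ih (hP d m hd hturn hm)
  | oMoves d hturn _ ih =>
    obtain ⟨m, hm, hI⟩ := hO d hd hturn
    exact ih m hm hI

section Stalling

variable {d : Dialogue} {m : Move}

def HasDefensiblePAttack (d : Dialogue) : Prop :=
  ∃ r a χ s, d.moveAt r = some a ∧ r % 2 = 0 ∧ a.isAttack = true ∧
    d.stmtAt a.ref = some (.form χ) ∧ Defends χ a.statement s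

theorem HasDefensiblePAttack.extend (h : HasDefensiblePAttack d) :
    HasDefensiblePAttack (d.extend m) :=
  let ⟨r, a, χ, s, ha, hr, hatt, hχ, hdef⟩ := h
  ⟨r, a, χ, s, moveAt_extend_of_eq_some m ha, hr, hatt, stmtAt_extend_of_eq_some m hχ, hdef⟩

theorem hasDefensiblePAttack_of_stmtAt (hd : ParticleOK d) {n : ℕ} (hn : n % 2 = 0)
    {s : Statement} (hs : d.stmtAt n = some s) (hform : ∀ φ, s ≠ .form φ) :
    HasDefensiblePAttack d := by
  rcases n with _ | n
  · exact absurd (Option.some_inj.1 hs).symm (hform _)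
  rw [stmtAt_succ, Option.map_eq_some_iff] at hs
  obtain ⟨a, ha, rfl⟩ := hs
  obtain ⟨-, -, hatt, hdef⟩ := hd.moveOK ha
  cases hb : a.isAttack
  · obtain ⟨b, ψ, -, -, -, hψ⟩ := hdef hb
    obtain ⟨φ, hφ⟩ := hψ.exists_eq_form
    exact absurd hφ (hform φ)
  · obtain ⟨ψ, hψ, hatt⟩ := hatt hb
    obtain ⟨t, ht⟩ := hatt.exists_defends hform
    exact ⟨n + 1, a, ψ, t, ha, hn, hb, hψ, ht⟩

theorem HasDefensiblePAttack.exists_legalExt (hd : Legal rulesetN d) (hturn : ¬ PTurn d)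
    (h : HasDefensiblePAttack d) : ∃ m, LegalExt rulesetN d m := by
  obtain ⟨r, a, χ, s, ha, hr, hatt, hχ, hdef⟩ := h
  have := (pos_le_length_of_moveAt_eq_some ha).2
  have hodd := hturn
  simp only [PTurn, nextPos] at hodd
  exact ⟨⟨s, false, r⟩, legalExt_rulesetN_of_oTurn hd hturn
    ⟨by simp only [nextPos]; omega, by simp only [nextPos]; omega, by simp,
      fun _ => ⟨a, χ, ha, hatt, hχ, hdef⟩⟩ (by simp)⟩

def OHasAssertedAtom (d : Dialogue) : Prop :=
  ∃ j q, j % 2 = 1 ∧ d.stmtAt j = some (.form (.atom q))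

theorem OHasAssertedAtom.of_extend (h : OHasAssertedAtom (d.extend m))
    (hm : nextPos d % 2 = 1 → ∀ q, m.statement ≠ .form (.atom q)) : OHasAssertedAtom d := by
  obtain ⟨j, q, hj, hq⟩ := h
  rw [stmtAt_extend] at hq
  split_ifs at hq with hj'
  · subst hj'
    exact absurd (Option.some_inj.1 hq) (hm hj q)
  · exact ⟨j, q, hj, hq⟩

def StallInvariant (φ : Formula) (d : Dialogue) : Prop :=
  d.initial = φ ∧ Legal rulesetN d ∧ (OHasAssertedAtom d → HasDefensiblePAttack d)

theorem StallInvariant.extend_of_pTurn {φ : Formula} (h : StallInvariant φ d) (hturn : PTurn d)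
    (hm : LegalExt rulesetN d m) : StallInvariant φ (d.extend m) := by
  refine ⟨h.1, hm, fun hO => (h.2.2 (hO.of_extend fun hodd => ?_)).extend⟩
  simp only [PTurn] at hturn
  omega

theorem StallInvariant.exists_oMove {φ : Formula}
    (hφ : ∀ χ ∈ φ.subformulas, ∀ q, ¬ Attacks (.form (.atom q)) χ)
    (h : StallInvariant φ d) (hturn : ¬ PTurn d) :
    ∃ m, LegalExt rulesetN d m ∧ StallInvariant φ (d.extend m) := by
  obtain ⟨hinit, hleg, hO⟩ := h
  by_cases hdef : HasDefensiblePAttack d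
  · obtain ⟨m, hm⟩ := hdef.exists_legalExt hleg hturn
    exact ⟨m, hm, hinit, hm, fun _ => hdef.extend⟩
  have hL : d.moves.length % 2 = 0 := by
    simp only [PTurn, nextPos] at hturn
    omega
  obtain ⟨s, hs⟩ := exists_stmtAt_length d
  cases s with
  | form χ =>
    by_cases hatom : ∃ q, χ = .atom q
    · obtain ⟨q, rfl⟩ := hatom
      obtain ⟨j, -, hj, hjq⟩ := hleg.2.1 _ q hL hs
      exact absurd (hO ⟨j, q, hj, hjq⟩) hdef
    push Not at hatom
    obtain ⟨s, hχs⟩ := Formula.exists_attacks hatom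
    have hm := legalExt_rulesetN_attack_last hleg hturn hs hχs
    refine ⟨_, hm, hinit, hm, fun hOext => absurd (hO (hOext.of_extend ?_)) hdef⟩
    rintro - q rfl
    exact hφ χ (hinit ▸ hleg.1.mem_subformulas hs) q hχs
  | _ => exact absurd (hasDefensiblePAttack_of_stmtAt hleg.1 hL hs (by simp)) hdef

end Stalling

theorem not_valid_rulesetN_of_forall_subformulas {φ : Formula}
    (hφ : ∀ χ ∈ φ.subformulas, ∀ q, ¬ Attacks (.form (.atom q)) χ) :
    ¬ valid rulesetN φ := by
  rintro ⟨hleg, hwin⟩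
  refine not_pWinningC_of_invariant (StallInvariant φ)
    (fun d m h hturn hm => h.extend_of_pTurn hturn hm)
    (fun d h hturn => h.exists_oMove hφ hturn) ⟨rfl, hleg, ?_⟩ hwin
  rintro ⟨j, q, hj, hq⟩
  have := le_length_of_stmtAt_eq_some hq
  simp only [List.length_nil, Nat.le_zero] at this
  omega

theorem not_valid_rulesetN_and_self_imp_negNeg (p : ℕ) :
    ¬ valid rulesetN
        (.imp (.and (.atom p) (.atom p)) (.neg (.neg (.and (.atom p) (.atom p))))) :=
  not_valid_rulesetN_of_forall_subformulas fun χ hχ q h => by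
    cases h <;> simp [Formula.subformulas] at hχ

namespace AtomImpNegNeg

variable (p : ℕ) {m : Move}

theorem first_oMove_eq
    (hm : LegalExt rulesetN ⟨.imp (.atom p) (.neg (.neg (.atom p))), []⟩ m) :
    m = ⟨.form (.atom p), true, 0⟩ := by
  obtain ⟨hlt, -, hatt, hdef⟩ := hm.moveOK
  obtain ⟨s, _ | _, r⟩ := m <;> obtain rfl : r = 0 := Nat.lt_one_iff.1 hlt
  · obtain ⟨a, χ, ha, -⟩ := hdef rfl
    cases ha
  · obtain ⟨ψ, hψ, hatt⟩ := hatt rfl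
    cases hψ
    cases hatt
    rfl

theorem second_oMove_eq
    (hm : LegalExt rulesetN ⟨.imp (.atom p) (.neg (.neg (.atom p))),
      [⟨.form (.atom p), true, 0⟩, ⟨.form (.neg (.neg (.atom p))), false, 1⟩]⟩ m) :
    m = ⟨.form (.neg (.atom p)), true, 2⟩ := by
  obtain ⟨hlt, hpar, hatt, hdef⟩ := hm.moveOK
  obtain ⟨s, _ | _, r⟩ := m <;> change r < 3 at hlt <;> change r % 2 ≠ 3 % 2 at hpar <;>
    obtain rfl | rfl : r = 0 ∨ r = 2 := by omega
  · obtain ⟨a, χ, ha, -⟩ := hdef rfl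
    cases ha
  · obtain ⟨a, χ, ha, haa, -⟩ := hdef rfl
    cases ha
    cases haa
  · exact absurd ⟨_, rfl, rfl, rfl⟩ ((D13_extend_iff.1 hm.2.2).2 rfl rfl 1)
  · obtain ⟨ψ, hψ, hatt⟩ := hatt rfl
    cases hψ
    cases hatt
    rfl

theorem not_legalExt_third_oMove
    (hm : LegalExt rulesetN ⟨.imp (.atom p) (.neg (.neg (.atom p))),
      [⟨.form (.atom p), true, 0⟩, ⟨.form (.neg (.neg (.atom p))), false, 1⟩,
        ⟨.form (.neg (.atom p)), true, 2⟩, ⟨.form (.atom p), true, 3⟩]⟩ m) : False := by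
  obtain ⟨hlt, hpar, hatt, hdef⟩ := hm.moveOK
  obtain ⟨s, _ | _, r⟩ := m <;> change r < 5 at hlt <;> change r % 2 ≠ 5 % 2 at hpar <;>
    obtain rfl | rfl | rfl : r = 0 ∨ r = 2 ∨ r = 4 := by omega
  · obtain ⟨a, χ, ha, -⟩ := hdef rfl
    cases ha
  · obtain ⟨a, χ, ha, haa, -⟩ := hdef rfl
    cases ha
    cases haa
  · obtain ⟨a, χ, ha, -, hχ, hdef⟩ := hdef rfl
    cases ha
    cases hχ
    cases hdef
  · exact (D13_extend_iff.1 hm.2.2).2 rfl rfl 1 ⟨_, rfl, rfl, rfl⟩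
  · exact (D13_extend_iff.1 hm.2.2).2 rfl (Nat.mod_self 2) 3 ⟨_, rfl, rfl, rfl⟩
  · obtain ⟨ψ, hψ, hatt⟩ := hatt rfl
    cases hψ
    cases hatt

theorem legalExt_first_pMove
    (hd : Legal rulesetN ⟨.imp (.atom p) (.neg (.neg (.atom p))), [⟨.form (.atom p), true, 0⟩]⟩) :
    LegalExt rulesetN ⟨.imp (.atom p) (.neg (.neg (.atom p))), [⟨.form (.atom p), true, 0⟩]⟩
      ⟨.form (.neg (.neg (.atom p))), false, 1⟩ :=
  legalExt_rulesetN_of_pTurn hd (by simp [PTurn, nextPos])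
    ⟨Nat.one_lt_two, by simp [nextPos], nofun, fun _ => ⟨_, _, rfl, rfl, rfl, .imp _ _⟩⟩ nofun

theorem legalExt_second_pMove
    (hd : Legal rulesetN ⟨.imp (.atom p) (.neg (.neg (.atom p))),
      [⟨.form (.atom p), true, 0⟩, ⟨.form (.neg (.neg (.atom p))), false, 1⟩,
        ⟨.form (.neg (.atom p)), true, 2⟩]⟩) :
    LegalExt rulesetN ⟨.imp (.atom p) (.neg (.neg (.atom p))),
      [⟨.form (.atom p), true, 0⟩, ⟨.form (.neg (.neg (.atom p))), false, 1⟩,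
        ⟨.form (.neg (.atom p)), true, 2⟩]⟩ ⟨.form (.atom p), true, 3⟩ :=
  legalExt_rulesetN_of_pTurn hd (by simp [PTurn, nextPos]) ⟨by simp [nextPos], by simp [nextPos],
    fun _ => ⟨_, rfl, .neg _⟩, nofun⟩ fun _ hq => ⟨1, by simp [nextPos], rfl, hq ▸ rfl⟩

end AtomImpNegNeg

theorem valid_rulesetN_atom_imp_negNeg (p : ℕ) :
    valid rulesetN (.imp (.atom p) (.neg (.neg (.atom p)))) := by
  refine ⟨legal_rulesetN_nil nofun, .oMoves _ (by simp [PTurn, nextPos]) fun m₁ hm₁ => ?_⟩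
  obtain rfl := AtomImpNegNeg.first_oMove_eq p hm₁
  refine .pMove _ _ (by simp [PTurn, nextPos, extend]) (AtomImpNegNeg.legalExt_first_pMove p hm₁)
    trivial (.oMoves _ (by simp [PTurn, nextPos, extend]) fun m₃ hm₃ => ?_)
  obtain rfl := AtomImpNegNeg.second_oMove_eq p hm₃
  exact .pMove _ _ (by simp [PTurn, nextPos, extend]) (AtomImpNegNeg.legalExt_second_pMove p hm₃)
    trivial (.oMoves _ (by simp [PTurn, nextPos, extend]) fun m₅ hm₅ =>
      (AtomImpNegNeg.not_legalExt_third_oMove p hm₅).elim)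

/-- (Failure of uniform substitution for N) For an atom p, p → ¬¬p is
N-valid but (p ∧ p) → ¬¬(p ∧ p) is not; hence the set of N-valid formulas
is not closed under uniform substitution. -/
theorem N_not_closed_under_substitution (p : ℕ) :
    valid rulesetN (.imp (.atom p) (.neg (.neg (.atom p)))) ∧
    ¬ valid rulesetN
        (.imp (.and (.atom p) (.atom p))
          (.neg (.neg (.and (.atom p) (.atom p))))) ∧
    ¬ (∀ (φ : Formula) (σ : ℕ → Formula),
        valid rulesetN φ → valid rulesetN (φ.subst σ)) :=
  ⟨valid_rulesetN_atom_imp_negNeg p, not_valid_rulesetN_and_self_imp_negNeg p, fun h =>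
    not_valid_rulesetN_and_self_imp_negNeg p
      (h _ (fun _ => .and (.atom p) (.atom p)) (valid_rulesetN_atom_imp_negNeg p))⟩

end LorenzenDialogues
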